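/- arXiv:2204.10009 — 5 statements merged into one kernel-verified Lean document; each statement's English description precedes it below -/
import Mathlib

section
/- For any real numbers a > 0, d ≥ 0 and any integer N ≥ 2, one has (d + a·∑_{k=⌈N/2⌉}^{N} 1/k) / (∑_{k=⌈N/2⌉}^{N} 1/√(k+1)) ≤ 4(d + a·ln 3) / √(N+2). -/
/-!
The numerator is a tail of the harmonic series from about `N / 2` to `N`, which comparison with
`∫ dx / x` bounds by `log 3` once `N ≥ 3` (for `N = 4` the integral only gives `log 4`, and
`1/2 + 1/3 + 1/4 < log 3` is checked directly). The denominator has at least `(N + 1) / 2` terms,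
each at least `1 / √(N + 1)`, so it is at least `√(N + 1) / 2 ≥ √(N + 2) / 4`. For `N = 2` the
numerator sum is `3/2 > log 3`, and the slack in the denominator bound pays for it.
-/

open Finset Real

lemma sum_Ioc_inv_le_log_div {n N : ℕ} (hn : 1 ≤ n) (hnN : n ≤ N) :
    ∑ k ∈ Ioc n N, (k : ℝ)⁻¹ ≤ log (N / n) := by
  have hn' : (1 : ℝ) ≤ n := by exact_mod_cast hn
  have hnN' : (n : ℝ) ≤ N := by exact_mod_cast hnN
  have hanti : AntitoneOn (fun x : ℝ ↦ x⁻¹) (Set.Icc n N) :=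
    fun x hx _ _ hxy ↦ inv_anti₀ (by linarith [hx.1]) hxy
  calc ∑ k ∈ Ioc n N, (k : ℝ)⁻¹ = ∑ i ∈ Ico n N, ((i + 1 : ℕ) : ℝ)⁻¹ := by
        rw [← Ico_add_one_add_one_eq_Ioc, ← sum_Ico_add']
    _ ≤ ∫ x in (n : ℝ)..N, x⁻¹ := hanti.sum_le_integral_Ico hnN
    _ = log (N / n) := integral_inv_of_pos (by linarith) (by linarith)

lemma sum_Icc_half_inv_le_log_three {N : ℕ} (hN : 3 ≤ N) :
    ∑ k ∈ Icc ((N + 1) / 2) N, (1 : ℝ) / k ≤ log 3 := by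
  have hlog3 := log_three_gt_d9
  obtain rfl | hN4 := eq_or_ne N 4
  · norm_num [show Icc ((4 + 1) / 2) 4 = {2, 3, 4} by decide] at hlog3 ⊢
    linarith
  obtain ⟨n, hn⟩ : ∃ n, (N + 1) / 2 = n + 1 := ⟨(N + 1) / 2 - 1, by omega⟩
  have hn1 : (1 : ℝ) ≤ n := by exact_mod_cast (by omega : 1 ≤ n)
  have hN3n : (N : ℝ) ≤ 3 * n := by exact_mod_cast (by omega : N ≤ 3 * n)
  have hN' : (3 : ℝ) ≤ N := by exact_mod_cast hN
  calc ∑ k ∈ Icc ((N + 1) / 2) N, (1 : ℝ) / k = ∑ k ∈ Ioc n N, (k : ℝ)⁻¹ := by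
        simp only [hn, Icc_add_one_left_eq_Ioc, one_div]
    _ ≤ log (N / n) := sum_Ioc_inv_le_log_div (by omega) (by omega)
    _ ≤ log 3 :=
        log_le_log (div_pos (by linarith) (by linarith)) (by rwa [div_le_iff₀ (by linarith)])

lemma sqrt_div_two_le_sum_inv_sqrt {m N : ℕ} (hm : N + 1 ≤ 2 * (N + 1 - m)) :
    √(N + 1) / 2 ≤ ∑ k ∈ Icc m N, (1 : ℝ) / √(k + 1) := by
  have hterm : ∀ k ∈ Icc m N, 1 / √((N : ℝ) + 1) ≤ 1 / √((k : ℝ) + 1) := fun k hk ↦ by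
    have hkN : (k : ℝ) ≤ N := by exact_mod_cast (mem_Icc.1 hk).2
    gcongr
  have hcard : ((N : ℝ) + 1) / 2 ≤ #(Icc m N) := by
    have := (Nat.cast_le (α := ℝ)).2 hm
    push_cast at this
    rw [Nat.card_Icc]
    linarith
  calc √(N + 1) / 2 = ((N : ℝ) + 1) / 2 * (1 / √(N + 1)) := by
        conv_lhs => rw [← div_sqrt]
        ring
    _ ≤ #(Icc m N) * (1 / √(N + 1)) := by gcongr
    _ ≤ ∑ k ∈ Icc m N, (1 : ℝ) / √(k + 1) := by
        rw [← nsmul_eq_mul]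
        exact card_nsmul_le_sum _ _ _ hterm

theorem stmt_1 (a d : ℝ) (ha : 0 < a) (hd : 0 ≤ d) (N : ℕ) (hN : 2 ≤ N) :
    (d + a * ∑ k ∈ Finset.Icc ((N + 1) / 2) N, (1 : ℝ) / k) /
      (∑ k ∈ Finset.Icc ((N + 1) / 2) N, (1 : ℝ) / Real.sqrt (k + 1)) ≤
    4 * (d + a * Real.log 3) / Real.sqrt (N + 2) := by
  have hden : √(N + 1) / 2 ≤ ∑ k ∈ Icc ((N + 1) / 2) N, (1 : ℝ) / √(k + 1) :=
    sqrt_div_two_le_sum_inv_sqrt (by omega)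
  have hlog3 := log_three_gt_d9
  obtain rfl | hN3 := hN.eq_or_lt
  · have hnum : ∑ k ∈ Icc ((2 + 1) / 2 : ℕ) 2, (1 : ℝ) / k = 3 / 2 := by
      norm_num [show Icc ((2 + 1) / 2 : ℕ) 2 = {1, 2} by decide]
    have hsqrt3 : (3 : ℝ) / 2 ≤ √(((2 : ℕ) : ℝ) + 1) := by rw [le_sqrt] <;> norm_num
    have hsqrt4 : √(((2 : ℕ) : ℝ) + 2) = 2 := by rw [sqrt_eq_iff_mul_self_eq] <;> norm_num
    rw [hsqrt4]
    calc _ ≤ (d + a * (3 / 2)) / (3 / 4) :=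
          div_le_div₀ (by positivity) (by rw [hnum]) (by norm_num) (by linarith)
      _ ≤ 4 * (d + a * log 3) / 2 := by nlinarith
  · have hsqrt : √((N : ℝ) + 2) ≤ 2 * √(N + 1) := by
      rw [sqrt_le_iff, mul_pow, sq_sqrt (by positivity)]
      constructor <;> [positivity; linarith]
    calc _ ≤ (d + a * log 3) / (√(N + 2) / 4) :=
          div_le_div₀ (by positivity) (by gcongr; exact sum_Icc_half_inv_le_log_three hN3)
            (by positivity) (by linarith)
      _ = _ := by field_simp
end

section
/- Let (v_k) be a sequence in ℝⁿ that is quasi-Fejér convergent to a nonempty set S ⊆ ℝⁿ. Then (v_k) is bounded. -/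
/-! Fix x ∈ S. Subtracting the partial sums of ε from ‖v k - x‖² gives a sequence that is nonincreasing
from k₀ on, so ‖v k - x‖² ≤ ‖v k₀ - x‖² + ∑ ε for k ≥ k₀: all v k lie in one ball around x. -/

open Filter Finset

theorem bddAbove_range_of_le_add_summable {a ε : ℕ → ℝ} (hε : ∀ k, 0 ≤ ε k) (hεs : Summable ε)
    {k₀ : ℕ} (h : ∀ k ≥ k₀, a (k + 1) ≤ a k + ε k) : BddAbove (Set.range a) := by
  set b : ℕ → ℝ := fun k ↦ a k - ∑ i ∈ range k, ε i
  have hb : ∀ k ≥ k₀, b k ≤ b k₀ := by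
    refine Nat.le_induction le_rfl fun k hk ih ↦ ?_
    have := h k hk
    simp only [b, sum_range_succ] at ih ⊢
    linarith
  refine (isBoundedUnder_of_eventually_le (a := b k₀ + ∑' i, ε i) ?_).bddAbove_range
  filter_upwards [eventually_ge_atTop k₀] with k hk
  calc a k = b k + ∑ i ∈ range k, ε i := by simp only [b, sub_add_cancel]
    _ ≤ b k₀ + ∑' i, ε i := add_le_add (hb k hk) (hεs.sum_le_tsum _ fun i _ ↦ hε i)

theorem Metric.isBounded_range_of_bddAbove_dist_sq {α : Type*} [PseudoMetricSpace α]
    {v : ℕ → α} (x : α) (h : BddAbove (Set.range fun k ↦ dist (v k) x ^ 2)) :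
    Bornology.IsBounded (Set.range v) := by
  obtain ⟨C, hC⟩ := h
  refine (Metric.isBounded_closedBall (x := x) (r := √C)).subset ?_
  rintro _ ⟨k, rfl⟩
  exact Metric.mem_closedBall.2 (Real.le_sqrt_of_sq_le (hC ⟨k, rfl⟩))

theorem stmt_5 (n : ℕ) (v : ℕ → EuclideanSpace ℝ (Fin n))
    (S : Set (EuclideanSpace ℝ (Fin n))) (hS : S.Nonempty)
    (h : ∀ x ∈ S, ∃ (k₀ : ℕ) (ε : ℕ → ℝ), (∀ k, 0 ≤ ε k) ∧ Summable ε ∧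
        ∀ k ≥ k₀, ‖v (k + 1) - x‖ ^ 2 ≤ ‖v k - x‖ ^ 2 + ε k) :
    Bornology.IsBounded (Set.range v) := by
  obtain ⟨x, hx⟩ := hS
  obtain ⟨k₀, ε, hε, hεs, hfejer⟩ := h x hx
  refine Metric.isBounded_range_of_bddAbove_dist_sq x ?_
  simp only [dist_eq_norm]
  exact bddAbove_range_of_le_add_summable hε hεs hfejer
end

section
/- Let (v_k) be a sequence in ℝⁿ that is quasi-Fejér convergent to a nonempty set S ⊆ ℝⁿ. If some cluster point v̄ of (v_k) belongs to S, then the whole sequence (v_k) converges to v̄. -/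
/-!
Along a quasi-Fejér sequence the squared distances to a point of `S` drop by at most a summable
amount per step, so subtracting the partial sums of the errors leaves a nonincreasing sequence
bounded below; hence these squared distances converge. At the cluster point `vbar` their limit is
read off along the convergent subsequence, where it is `0`.
-/

open Filter Topology Finset

theorem exists_tendsto_of_le_add_summable {d ε : ℕ → ℝ} (hd : BddBelow (Set.range d))
    (hε : Summable ε) (hstep : ∀ k, d (k + 1) ≤ d k + ε k) : ∃ L, Tendsto d atTop (𝓝 L) := by
  set S : ℕ → ℝ := fun k => ∑ i ∈ range k, ε i
  have hS : Tendsto S atTop (𝓝 (∑' i, ε i)) := hε.hasSum.tendsto_sum_nat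
  have hanti : Antitone fun k => d k - S k := antitone_nat_of_succ_le fun k => by
    simp only [S, sum_range_succ]
    linarith [hstep k]
  have hbdd : BddBelow (Set.range fun k => d k - S k) := by
    obtain ⟨c, hc⟩ := hd
    obtain ⟨M, hM⟩ := hS.bddAbove_range
    refine ⟨c - M, ?_⟩
    rintro _ ⟨k, rfl⟩
    linarith [hc ⟨k, rfl⟩, hM ⟨k, rfl⟩]
  exact ⟨_, ((tendsto_atTop_ciInf hanti hbdd).add hS).congr fun k => sub_add_cancel _ _⟩

theorem exists_tendsto_of_eventually_le_add_summable {d ε : ℕ → ℝ} (hd : BddBelow (Set.range d))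
    (hε : Summable ε) (hstep : ∀ᶠ k in atTop, d (k + 1) ≤ d k + ε k) :
    ∃ L, Tendsto d atTop (𝓝 L) := by
  obtain ⟨k₀, hk₀⟩ := eventually_atTop.1 hstep
  have hd' : BddBelow (Set.range fun k => d (k + k₀)) :=
    hd.mono (Set.range_comp_subset_range _ d)
  obtain ⟨L, hL⟩ := exists_tendsto_of_le_add_summable hd' ((summable_nat_add_iff k₀).2 hε)
    fun k => by simpa only [Nat.add_right_comm k 1 k₀] using hk₀ (k + k₀) (Nat.le_add_left _ _)
  exact ⟨L, (tendsto_add_atTop_iff_nat k₀).1 hL⟩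

theorem tendsto_of_dist_sq_le_add_summable_of_subseq {X : Type*} [PseudoMetricSpace X]
    {v : ℕ → X} {x : X} {ε : ℕ → ℝ} (hε : Summable ε)
    (hstep : ∀ᶠ k in atTop, dist (v (k + 1)) x ^ 2 ≤ dist (v k) x ^ 2 + ε k)
    {φ : ℕ → ℕ} (hφ : StrictMono φ) (hvφ : Tendsto (v ∘ φ) atTop (𝓝 x)) :
    Tendsto v atTop (𝓝 x) := by
  obtain ⟨L, hL⟩ := exists_tendsto_of_eventually_le_add_summable (d := fun k => dist (v k) x ^ 2)
    ⟨0, by rintro _ ⟨k, rfl⟩; exact sq_nonneg _⟩ hε hstep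
  have hsub : Tendsto (fun k => dist (v (φ k)) x ^ 2) atTop (𝓝 0) := by
    simpa using ((tendsto_iff_dist_tendsto_zero.1 hvφ).pow 2)
  have hL0 : L = 0 := tendsto_nhds_unique (hL.comp hφ.tendsto_atTop) hsub
  subst hL0
  refine tendsto_iff_dist_tendsto_zero.2 ?_
  simpa [Real.sqrt_sq dist_nonneg] using hL.sqrt

theorem stmt_6_general (n : ℕ) (v : ℕ → EuclideanSpace ℝ (Fin n))
    (S : Set (EuclideanSpace ℝ (Fin n)))
    (h : ∀ x ∈ S, ∃ (k₀ : ℕ) (ε : ℕ → ℝ), (∀ k, 0 ≤ ε k) ∧ Summable ε ∧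
        ∀ k ≥ k₀, ‖v (k + 1) - x‖ ^ 2 ≤ ‖v k - x‖ ^ 2 + ε k)
    (vbar : EuclideanSpace ℝ (Fin n))
    (hcluster : ∃ φ : ℕ → ℕ, StrictMono φ ∧ Tendsto (v ∘ φ) atTop (nhds vbar))
    (hvbar : vbar ∈ S) :
    Tendsto v atTop (nhds vbar) := by
  obtain ⟨φ, hφ, hvφ⟩ := hcluster
  obtain ⟨k₀, ε, -, hε, hstep⟩ := h vbar hvbar
  refine tendsto_of_dist_sq_le_add_summable_of_subseq hε ?_ hφ hvφ
  filter_upwards [eventually_ge_atTop k₀] with k hk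
  simpa only [dist_eq_norm] using hstep k hk

theorem stmt_6 (n : ℕ) (v : ℕ → EuclideanSpace ℝ (Fin n))
    (S : Set (EuclideanSpace ℝ (Fin n))) (hS : S.Nonempty)
    (h : ∀ x ∈ S, ∃ (k₀ : ℕ) (ε : ℕ → ℝ), (∀ k, 0 ≤ ε k) ∧ Summable ε ∧
        ∀ k ≥ k₀, ‖v (k + 1) - x‖ ^ 2 ≤ ‖v k - x‖ ^ 2 + ε k)
    (vbar : EuclideanSpace ℝ (Fin n))
    (hcluster : ∃ φ : ℕ → ℕ, StrictMono φ ∧ Tendsto (v ∘ φ) atTop (nhds vbar))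
    (hvbar : vbar ∈ S) :
    Tendsto v atTop (nhds vbar) :=
  stmt_6_general n v S h vbar hcluster hvbar
end

section
/- Suppose a sequence (x_k) ⊂ ℝⁿ with f(x_k) ≥ f* satisfies, with γ_k = 1/√k, Γ·(1/√(k+1))·(f(x_k) − f*) ≤ ‖x_k − x*‖² − ‖x_{k+1} − x*‖² + (βc/ρ)(1/k) for all k ≥ 1, where Γ > 0, β ∈ (0,1), c > 0, ρ > 1/2. Then for every N ≥ 1: min{f(x_k) − f* : k = 1,…,N} ≤ (4/Γ)·(‖x_1 − x*‖² + βc/ρ + (βc/ρ)·ln N)/√N; in particular the minimum tends to 0 as N → ∞. -/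
/-!
Multiplying the minimum by the weights `Γ / √(k+1)` and summing the recursion over `k ≤ N`
telescopes the distances: `min · Γ √N / 2 ≤ ‖x₁ - x*‖² + a ∑ 1/k ≤ ‖x₁ - x*‖² + a (1 + ln N)`
with `a = βc/ρ`, using `√(k+1) ≤ 2√N` and the harmonic bound. The limit follows from
`ln N / √N → 0`.
-/

open Filter Finset

theorem sum_Icc_inv_le_one_add_log (N : ℕ) :
    ∑ k ∈ Icc 1 N, 1 / (k : ℝ) ≤ 1 + Real.log N := by
  simpa [harmonic_eq_sum_Icc] using harmonic_le_one_add_log N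

theorem sqrt_div_two_le_sum_Icc_inv_sqrt_succ (N : ℕ) :
    √N / 2 ≤ ∑ k ∈ Icc 1 N, 1 / √((k : ℝ) + 1) := by
  rcases N.eq_zero_or_pos with rfl | hN
  · simp
  have hterm : ∀ k ∈ Icc 1 N, 1 / (2 * √N) ≤ 1 / √((k : ℝ) + 1) := by
    intro k hk
    have hkN : (k : ℝ) + 1 ≤ 2 * N := by
      have := (mem_Icc.1 hk).2
      exact_mod_cast (by omega : k + 1 ≤ 2 * N)
    gcongr
    calc √((k : ℝ) + 1) ≤ √(4 * N) := Real.sqrt_le_sqrt (by linarith)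
      _ = 2 * √N := by rw [Real.sqrt_mul (by norm_num), show (4 : ℝ) = 2 ^ 2 by norm_num,
          Real.sqrt_sq (by norm_num)]
  calc √N / 2 = ∑ _k ∈ Icc 1 N, 1 / (2 * √N) := by
        rw [sum_const, Nat.card_Icc, nsmul_eq_mul, add_tsub_cancel_right]
        field_simp
        rw [Real.sq_sqrt (by positivity)]
    _ ≤ _ := sum_le_sum hterm

theorem sum_Icc_le_of_le_sub_succ_add {u e s : ℕ → ℝ} {N : ℕ} (hN : 1 ≤ N)
    (h : ∀ k ∈ Icc 1 N, u k ≤ e k - e (k + 1) + s k) :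
    ∑ k ∈ Icc 1 N, u k ≤ e 1 - e (N + 1) + ∑ k ∈ Icc 1 N, s k := by
  induction N, hN using Nat.le_induction with
  | base => simpa using h 1 (by simp)
  | succ N hN ih =>
    rw [sum_Icc_succ_top (by omega), sum_Icc_succ_top (by omega)]
    have := ih fun k hk => h k (Icc_subset_Icc_right N.le_succ hk)
    linarith [h (N + 1) (by simp)]

theorem inf'_mul_sum_le_sum_mul {ι : Type*} {s : Finset ι} (hs : s.Nonempty) {w g : ι → ℝ}
    (hw : ∀ i ∈ s, 0 ≤ w i) : s.inf' hs g * ∑ i ∈ s, w i ≤ ∑ i ∈ s, w i * g i := by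
  rw [mul_sum]
  exact sum_le_sum fun i hi => by
    rw [mul_comm]; exact mul_le_mul_of_nonneg_left (inf'_le g hi) (hw i hi)

theorem tendsto_mul_add_mul_log_div_sqrt_atTop (K C a : ℝ) :
    Tendsto (fun t : ℝ => K * (C + a * Real.log t) / √t) atTop (nhds 0) := by
  have hlog : Tendsto (fun t : ℝ => Real.log t / √t) atTop (nhds 0) := by
    refine (isLittleO_log_rpow_atTop one_half_pos).tendsto_div_nhds_zero.congr' ?_
    filter_upwards [eventually_ge_atTop 0] with t ht
    rw [Real.sqrt_eq_rpow]
  have hinv : Tendsto (fun t : ℝ => 1 / √t) atTop (nhds 0) := by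
    simp only [one_div]; exact tendsto_inv_atTop_zero.comp Real.tendsto_sqrt_atTop
  simpa [mul_div_assoc, add_div, div_eq_mul_one_div C] using
    ((hinv.const_mul C).add (hlog.const_mul a)).const_mul K

theorem inf'_le_of_descent_sqrt_step {Γ a : ℝ} {g e : ℕ → ℝ} (hΓ : 0 < Γ) (ha : 0 ≤ a)
    (he : ∀ k, 0 ≤ e k)
    (h : ∀ k : ℕ, 1 ≤ k → Γ * (1 / √(k + 1)) * g k ≤ e k - e (k + 1) + a * (1 / k))
    (N : ℕ) (hN : 1 ≤ N) :
    (Icc 1 N).inf' (nonempty_Icc.mpr hN) g ≤ (4 / Γ) * (e 1 + a + a * Real.log N) / √N := by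
  set m := (Icc 1 N).inf' (nonempty_Icc.mpr hN) g
  set S := ∑ k ∈ Icc 1 N, 1 / √((k : ℝ) + 1)
  set D := e 1 + a + a * Real.log N
  have hD : 0 ≤ D := by have := Real.log_natCast_nonneg N; have := he 1; positivity
  have hS : √N / 2 ≤ S := sqrt_div_two_le_sum_Icc_inv_sqrt_succ N
  have key : m * (Γ * S) ≤ D :=
    calc m * (Γ * S) = m * ∑ k ∈ Icc 1 N, Γ * (1 / √((k : ℝ) + 1)) := by rw [mul_sum]
      _ ≤ ∑ k ∈ Icc 1 N, Γ * (1 / √((k : ℝ) + 1)) * g k :=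
        inf'_mul_sum_le_sum_mul _ fun k _ => by positivity
      _ ≤ e 1 - e (N + 1) + ∑ k ∈ Icc 1 N, a * (1 / (k : ℝ)) :=
        sum_Icc_le_of_le_sub_succ_add hN fun k hk => h k (mem_Icc.1 hk).1
      _ ≤ D := by
        rw [← mul_sum]
        nlinarith [sum_Icc_inv_le_one_add_log N, he (N + 1)]
  calc m ≤ D / (Γ * S) := (le_div_iff₀ (by positivity)).2 key
    _ ≤ D / (Γ * (√N / 2)) := by gcongr
    _ = 2 * (D / (Γ * √N)) := by field_simp
    _ ≤ 4 * (D / (Γ * √N)) := by gcongr; norm_num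
    _ = 4 / Γ * D / √N := by field_simp

theorem stmt_13 (n : ℕ) (f : EuclideanSpace ℝ (Fin n) → ℝ) (fstar : ℝ)
    (x : ℕ → EuclideanSpace ℝ (Fin n)) (xstar : EuclideanSpace ℝ (Fin n))
    (Γ β c ρ : ℝ) (hΓ : 0 < Γ) (hβ : β ∈ Set.Ioo (0 : ℝ) 1) (hc : 0 < c)
    (hρ : 1 / 2 < ρ)
    (hrec : ∀ k : ℕ, 1 ≤ k → Γ * (1 / Real.sqrt (k + 1)) * (f (x k) - fstar) ≤
        ‖x k - xstar‖ ^ 2 - ‖x (k + 1) - xstar‖ ^ 2 + (β * c / ρ) * (1 / k))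
    (hge : ∀ k ≥ 1, fstar ≤ f (x k)) :
    (∀ N : ℕ, ∀ hN : 1 ≤ N,
      (Finset.Icc 1 N).inf' (Finset.nonempty_Icc.mpr hN) (fun k => f (x k) - fstar) ≤
        (4 / Γ) * (‖x 1 - xstar‖ ^ 2 + β * c / ρ + (β * c / ρ) * Real.log N) /
          Real.sqrt N) ∧
    Tendsto (fun N : ℕ =>
        (Finset.Icc 1 (N + 1)).inf' (Finset.nonempty_Icc.mpr (by omega))
          (fun k => f (x k) - fstar)) atTop (nhds 0) := by
  have ha : 0 ≤ β * c / ρ := div_nonneg (mul_pos hβ.1 hc).le (by linarith)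
  have rate := inf'_le_of_descent_sqrt_step (g := fun k => f (x k) - fstar)
    (e := fun k => ‖x k - xstar‖ ^ 2) hΓ ha (fun k => by positivity) hrec
  refine ⟨rate, tendsto_of_tendsto_of_tendsto_of_le_of_le tendsto_const_nhds ?_
    (fun N => le_inf' _ _ fun k hk => sub_nonneg.2 (hge k (mem_Icc.1 hk).1))
    (fun N => rate (N + 1) (by omega))⟩
  exact (tendsto_mul_add_mul_log_div_sqrt_atTop _ _ _).comp
    (tendsto_natCast_atTop_atTop.comp (tendsto_add_atTop_nat 1))
end

section
/- Let σ > 0, β ∈ (0,1), Θ > 0, Γ > 0, c > 0, ρ > 1/2, and set γ_k = 2/(σβΘk). Suppose (x_k) ⊂ ℝⁿ with f(x_k) ≥ f(x*) satisfies Γγ_{k+1}(f(x_k) − f(x*)) ≤ (1 − σβΘγ_{k+1})‖x_k − x*‖² − ‖x_{k+1} − x*‖² + (βc/ρ)γ_k² for all k ≥ 1. Then for every N ≥ 1: min{f(x_k) − f(x*) : k = 1,…,N} ≤ (8βc)/(ρσβΘΓ) · 1/(N+1). -/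
/-! Write `μ = σβΘ`, `D = βc/ρ` and `e_k = f(x_k) - f(x*)`. With `γ_{k+1} = 2/(μ(k+1))` one has
`1 - μγ_{k+1} = (k-1)/(k+1)`, so multiplying the recursion by `k(k+1)/2` turns it into
`(Γ/μ) k e_k + b_{k+1} - b_k ≤ 4D/μ²` with the potential `b_k = k(k-1)/2 ‖x_k - x*‖²`.
Summing over `k = 1, …, N` telescopes (`b_1 = 0`, `b_{N+1} ≥ 0`), and the minimum gap times
`∑ k = N(N+1)/2` is at most `∑ k e_k`, which gives the `O(1/N)` bound. -/

open Finset

theorem Finset.sum_mul_inf'_le {ι α : Type*} [CommSemiring α] [LinearOrder α] [IsOrderedRing α]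
    (s : Finset ι) (hs : s.Nonempty) (w e : ι → α) (hw : ∀ i ∈ s, 0 ≤ w i) :
    (∑ i ∈ s, w i) * s.inf' hs e ≤ ∑ i ∈ s, w i * e i := by
  rw [sum_mul]
  exact sum_le_sum fun i hi => mul_le_mul_of_nonneg_left (inf'_le e hi) (hw i hi)

theorem Finset.sum_Icc_one_natCast (N : ℕ) : ∑ k ∈ Icc 1 N, (k : ℝ) = N * (N + 1) / 2 := by
  induction N with
  | zero => simp
  | succ N ih =>
    rw [sum_Icc_succ_top (by omega), ih]
    push_cast
    ring

section SubgradientRate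

variable {μ Γ D : ℝ}

theorem weighted_descent_step (hμ : 0 < μ) (hD : 0 ≤ D) {k e d d' : ℝ} (hk : 1 ≤ k)
    (h : Γ * (2 / (μ * (k + 1))) * e ≤
      (1 - μ * (2 / (μ * (k + 1)))) * d - d' + D * (2 / (μ * k)) ^ 2) :
    Γ * k / μ * e + ((k + 1) * k / 2 * d' - k * (k - 1) / 2 * d) ≤ 4 * D / μ ^ 2 := by
  have hk0 : 0 < k := by linarith
  have hw : 0 ≤ k * (k + 1) / 2 := by positivity
  have scaled := mul_le_mul_of_nonneg_left h hw
  have gap_term : k * (k + 1) / 2 * (Γ * (2 / (μ * (k + 1))) * e) = Γ * k / μ * e := by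
    field_simp
  have dist_term : k * (k + 1) / 2 * ((1 - μ * (2 / (μ * (k + 1)))) * d - d') =
      k * (k - 1) / 2 * d - (k + 1) * k / 2 * d' := by
    field_simp
    ring
  -- the noise term is 2D(k+1)/(μ²k), and (k+1)/k ≤ 2
  have noise_term : k * (k + 1) / 2 * (D * (2 / (μ * k)) ^ 2) =
      4 * D / μ ^ 2 - 2 * D * (k - 1) / (μ ^ 2 * k) := by
    field_simp
    ring
  have noise_slack : 0 ≤ 2 * D * (k - 1) / (μ ^ 2 * k) := by
    apply div_nonneg <;> nlinarith
  rw [mul_add (k * (k + 1) / 2), dist_term, gap_term, noise_term] at scaled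
  linarith

theorem sum_weighted_gap_le {e d : ℕ → ℝ} (hμ : 0 < μ) (hD : 0 ≤ D) (hd : ∀ k, 0 ≤ d k)
    (hrec : ∀ k : ℕ, 1 ≤ k →
      Γ * (2 / (μ * (k + 1))) * e k ≤
        (1 - μ * (2 / (μ * (k + 1)))) * d k - d (k + 1) + D * (2 / (μ * k)) ^ 2)
    {N : ℕ} (hN : 1 ≤ N) :
    Γ / μ * ∑ k ∈ Icc 1 N, k * e k ≤ 4 * D / μ ^ 2 * N := by
  set b : ℕ → ℝ := fun k => k * (k - 1) / 2 * d k with hb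
  have step : ∀ k ∈ Icc 1 N, Γ / μ * (k * e k) + (b (k + 1) - b k) ≤ 4 * D / μ ^ 2 := by
    intro k hk
    have hk1 : (1 : ℝ) ≤ k := by exact_mod_cast (mem_Icc.mp hk).1
    have := weighted_descent_step hμ hD hk1 (hrec k (mem_Icc.mp hk).1)
    simp only [hb]
    push_cast
    convert this using 2 <;> ring
  have summed := sum_le_sum step
  rw [sum_add_distrib, ← mul_sum, sum_Icc_sub hN, sum_const, Nat.card_Icc, nsmul_eq_mul,
    Nat.add_sub_cancel] at summed
  have hb1 : b 1 = 0 := by simp [hb]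
  have hbN : 0 ≤ b (N + 1) := by
    have := hd (N + 1)
    simp only [hb, Nat.cast_add_one, add_sub_cancel_right]
    positivity
  linarith

theorem inf'_gap_le_of_step_recursion {e d : ℕ → ℝ} (hμ : 0 < μ) (hΓ : 0 < Γ) (hD : 0 ≤ D)
    (hd : ∀ k, 0 ≤ d k)
    (hrec : ∀ k : ℕ, 1 ≤ k →
      Γ * (2 / (μ * (k + 1))) * e k ≤
        (1 - μ * (2 / (μ * (k + 1)))) * d k - d (k + 1) + D * (2 / (μ * k)) ^ 2)
    (N : ℕ) (hN : 1 ≤ N) :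
    (Icc 1 N).inf' (nonempty_Icc.mpr hN) e ≤ 8 * D / (μ * Γ) * (1 / (N + 1)) := by
  have hN0 : (0 : ℝ) < N := by exact_mod_cast hN
  have averaged := (Icc 1 N).sum_mul_inf'_le (nonempty_Icc.mpr hN) (fun k => (k : ℝ)) e
    (fun k _ => k.cast_nonneg)
  rw [sum_Icc_one_natCast] at averaged
  have summed := sum_weighted_gap_le hμ hD hd hrec hN
  have bound : 8 * D / (μ * Γ) * (1 / (N + 1)) =
      4 * D / μ ^ 2 * N / (Γ / μ * (N * (N + 1) / 2)) := by
    field_simp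
    ring
  rw [bound, le_div_iff₀ (by positivity)]
  calc _ = Γ / μ * (N * (N + 1) / 2 * (Icc 1 N).inf' (nonempty_Icc.mpr hN) e) := by ring
    _ ≤ _ := mul_le_mul_of_nonneg_left averaged (by positivity)
    _ ≤ _ := summed

end SubgradientRate

theorem stmt_15_general (n : ℕ) (f : EuclideanSpace ℝ (Fin n) → ℝ)
    (x : ℕ → EuclideanSpace ℝ (Fin n)) (xstar : EuclideanSpace ℝ (Fin n))
    (σ β Θ Γ c ρ : ℝ) (hσ : 0 < σ) (hβ : β ∈ Set.Ioo (0 : ℝ) 1) (hΘ : 0 < Θ)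
    (hΓ : 0 < Γ) (hc : 0 < c) (hρ : 1 / 2 < ρ)
    (hrec : ∀ k : ℕ, 1 ≤ k →
        Γ * (2 / (σ * β * Θ * (k + 1))) * (f (x k) - f xstar) ≤
          (1 - σ * β * Θ * (2 / (σ * β * Θ * (k + 1)))) * ‖x k - xstar‖ ^ 2 -
            ‖x (k + 1) - xstar‖ ^ 2 + (β * c / ρ) * (2 / (σ * β * Θ * k)) ^ 2) :
    ∀ N : ℕ, ∀ hN : 1 ≤ N,
      (Finset.Icc 1 N).inf' (Finset.nonempty_Icc.mpr hN)
          (fun k => f (x k) - f xstar) ≤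
        (8 * β * c) / (ρ * σ * β * Θ * Γ) * (1 / (N + 1)) := by
  intro N hN
  have hβ0 := hβ.1
  have hρ0 : 0 < ρ := by linarith
  have rate := inf'_gap_le_of_step_recursion (by positivity) hΓ (by positivity)
    (fun k => sq_nonneg ‖x k - xstar‖) hrec N hN
  convert rate using 2
  field_simp

theorem stmt_15 (n : ℕ) (f : EuclideanSpace ℝ (Fin n) → ℝ)
    (x : ℕ → EuclideanSpace ℝ (Fin n)) (xstar : EuclideanSpace ℝ (Fin n))
    (σ β Θ Γ c ρ : ℝ) (hσ : 0 < σ) (hβ : β ∈ Set.Ioo (0 : ℝ) 1) (hΘ : 0 < Θ)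
    (hΓ : 0 < Γ) (hc : 0 < c) (hρ : 1 / 2 < ρ)
    (hge : ∀ k ≥ 1, f xstar ≤ f (x k))
    (hrec : ∀ k : ℕ, 1 ≤ k →
        Γ * (2 / (σ * β * Θ * (k + 1))) * (f (x k) - f xstar) ≤
          (1 - σ * β * Θ * (2 / (σ * β * Θ * (k + 1)))) * ‖x k - xstar‖ ^ 2 -
            ‖x (k + 1) - xstar‖ ^ 2 + (β * c / ρ) * (2 / (σ * β * Θ * k)) ^ 2) :
    ∀ N : ℕ, ∀ hN : 1 ≤ N,
      (Finset.Icc 1 N).inf' (Finset.nonempty_Icc.mpr hN)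
          (fun k => f (x k) - f xstar) ≤
        (8 * β * c) / (ρ * σ * β * Θ * Γ) * (1 / (N + 1)) :=
  stmt_15_general n f x xstar σ β Θ Γ c ρ hσ hβ hΘ hΓ hc hρ hrec
end
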